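/- Every polyhedrally constrained language is a finite disjoint union of linearly constrained languages. Consequently, the multivariate generating function of a polyhedrally constrained language is holonomic. -/

import Mathlib

/-- An atom over coordinates indexed by the alphabet `A`: a hyperplane or open
half-space in `ℤ^A`. -/
def CAtom {A : Type} [Fintype A] (E : Set (A → ℤ)) : Prop :=
  (∃ (a : A → ℤ) (b : ℤ), E = {v | (∑ i, a i * v i) = b}) ∨
  (∃ (a : A → ℤ) (b : ℤ), E = {v | (∑ i, a i * v i) > b})

/-- A linear constraint: a Boolean combination of atoms. -/
inductive CConstraint {A : Type} [Fintype A] : Set (A → ℤ) → Prop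
  | atom (E : Set (A → ℤ)) : CAtom E → CConstraint E
  | inter (P Q : Set (A → ℤ)) : CConstraint P → CConstraint Q → CConstraint (P ∩ Q)
  | union (P Q : Set (A → ℤ)) : CConstraint P → CConstraint Q → CConstraint (P ∪ Q)
  | compl (P : Set (A → ℤ)) : CConstraint P → CConstraint Pᶜ

/-- An elementary region in `ℤ^A`: additionally allows congruence conditions. -/
def ElementaryRegion {A : Type} [Fintype A] (E : Set (A → ℤ)) : Prop :=
  (∃ (a : A → ℤ) (b : ℤ), E = {v | (∑ i, a i * v i) = b}) ∨
  (∃ (a : A → ℤ) (b : ℤ), E = {v | (∑ i, a i * v i) > b}) ∨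
  (∃ (a : A → ℤ) (b c : ℤ), 0 < c ∧ E = {v | (∑ i, a i * v i) ≡ b [ZMOD c]})

/-- A polyhedral set: a finite disjoint union of finite intersections of
elementary regions. -/
def Polyhedral {A : Type} [Fintype A] (P : Set (A → ℤ)) : Prop :=
  ∃ (k : ℕ) (B : Fin k → Set (A → ℤ)),
    (∀ i, ∃ (l : ℕ) (E : Fin l → Set (A → ℤ)),
        (∀ j, ElementaryRegion (E j)) ∧ B i = ⋂ j, E j) ∧
    (∀ i j, i ≠ j → Disjoint (B i) (B j)) ∧
    P = ⋃ i, B i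

/-- The Parikh image of a word, as a vector of integers. -/
def parikh {A : Type} [DecidableEq A] (w : List A) : A → ℤ := fun a => (w.count a : ℤ)

/-- The constrained language `L(U, C) = {w ∈ U : Φ(w) ∈ C}`. -/
def constrained {A : Type} [DecidableEq A] (U : Set (List A)) (C : Set (A → ℤ)) :
    Set (List A) :=
  {w | w ∈ U ∧ parikh w ∈ C}

/-- A language is regular if it is accepted by a DFA with finitely many states. -/
def Regular {A : Type} (L : Set (List A)) : Prop :=
  ∃ (Q : Type) (_ : Fintype Q) (dfa : DFA A Q), dfa.accepts = L

/-- The multivariate generating function of a language, as a family of coefficients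
indexed by Parikh vectors: the coefficient at `d` counts the words of `L` with
Parikh image `d`. -/
noncomputable def genFun {A : Type} [DecidableEq A] (L : Set (List A)) :
    (A →₀ ℕ) → ℂ :=
  fun d => (Nat.card {w : List A // w ∈ L ∧ ∀ a, w.count a = d a} : ℂ)

/-!
A polyhedral set is a disjoint union of blocks, each a finite intersection of hyperplanes,
half-spaces and congruence regions `∑ aᵢ vᵢ ≡ b [ZMOD c]`. On Parikh images a congruence region is
recognised by the automaton that sums the weights `a x` of the letters in `ZMod c`, so it can be
moved out of the constraint and into the language: each block `B` gives
`L(U, B) = L(U ∩ R, C)` with `C` a linear constraint and `R` regular, and `U ∩ R` is still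
unambiguous. The generating function of the resulting disjoint union is the sum of the
generating functions of its pieces, each holonomic by Massazza's theorem.
-/

theorem regular_univ {A : Type} : Regular (Set.univ : Set (List A)) :=
  ⟨Unit, inferInstance, ⟨fun _ _ => (), (), Set.univ⟩, Set.eq_univ_of_forall fun _ => trivial⟩

theorem regular_setOf_sum_map_mem {A M : Type} [AddMonoid M] [Fintype M] (g : A → M)
    (S : Set M) : Regular {w : List A | (w.map g).sum ∈ S} := by
  let D : DFA A M := ⟨fun s x => s + g x, 0, S⟩
  have hD : ∀ w s, D.evalFrom s w = s + (w.map g).sum := by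
    intro w
    induction w with
    | nil => simp
    | cons x w ih => intro s; simp [DFA.evalFrom_cons, ih, D, add_assoc]
  exact ⟨M, inferInstance, D, Set.ext fun w => by
    show D.evalFrom 0 w ∈ S ↔ (w.map g).sum ∈ S
    rw [hD, zero_add]⟩

theorem sum_mul_parikh {A : Type} [Fintype A] [DecidableEq A] (a : A → ℤ) (w : List A) :
    ∑ i, a i * parikh w i = (w.map a).sum := by
  rw [Finset.sum_list_map_count]
  refine (Finset.sum_subset (Finset.subset_univ _) fun i _ hi => ?_).symm.trans
    (Finset.sum_congr rfl fun i _ => by simp [parikh, mul_comm])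
  simp [parikh, List.count_eq_zero_of_not_mem (by simpa using hi)]

theorem regular_setOf_modEq {A : Type} [Fintype A] [DecidableEq A] (a : A → ℤ) (b : ℤ) {c : ℤ}
    (hc : 0 < c) : Regular {w : List A | ∑ i, a i * parikh w i ≡ b [ZMOD c]} := by
  lift c to ℕ using hc.le
  have : NeZero c := ⟨by omega⟩
  convert regular_setOf_sum_map_mem (fun x => (a x : ZMod c)) {(b : ZMod c)} using 2 with w
  simp [sum_mul_parikh, ← ZMod.intCast_eq_intCast_iff, Function.comp_def]

theorem CConstraint.univ {A : Type} [Fintype A] : CConstraint (Set.univ : Set (A → ℤ)) :=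
  .atom _ (Or.inl ⟨0, 0, by ext; simp⟩)

theorem CConstraint.empty {A : Type} [Fintype A] : CConstraint (∅ : Set (A → ℤ)) :=
  .atom _ (Or.inr ⟨0, 0, by ext; simp⟩)

section Constrained

variable {A : Type} [DecidableEq A]

theorem constrained_eq_constrained_inter {E C : Set (A → ℤ)} {R : Set (List A)}
    (h : ∀ w, parikh w ∈ E ↔ parikh w ∈ C ∧ w ∈ R) (U : Set (List A)) :
    constrained U E = constrained (U ∩ R) C := by
  ext w
  simp only [constrained, Set.mem_ofPred_eq, Set.mem_inter_iff, h]
  tauto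

theorem constrained_iUnion {ι : Type} (U : Set (List A)) (C : ι → Set (A → ℤ)) :
    constrained U (⋃ i, C i) = ⋃ i, constrained U (C i) := by
  ext w
  simp [constrained]

theorem Disjoint.constrained {C D : Set (A → ℤ)} (h : Disjoint C D) (U V : Set (List A)) :
    Disjoint (constrained U C) (constrained V D) :=
  Set.disjoint_left.2 fun _ hC hD => Set.disjoint_left.1 h hC.2 hD.2

end Constrained

section ConstraintModRegular

variable {A : Type} [Fintype A] [DecidableEq A]

/-- On Parikh images, `E` is cut out by a linear constraint together with a regular language. -/
def IsConstraintModRegular (E : Set (A → ℤ)) : Prop :=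
  ∃ C R, CConstraint C ∧ Regular R ∧ ∀ w, parikh w ∈ E ↔ parikh w ∈ C ∧ w ∈ R

namespace IsConstraintModRegular

theorem univ : IsConstraintModRegular (Set.univ : Set (A → ℤ)) :=
  ⟨_, _, .univ, regular_univ, fun _ => by simp⟩

theorem inter {E F : Set (A → ℤ)} (hE : IsConstraintModRegular E)
    (hF : IsConstraintModRegular F) : IsConstraintModRegular (E ∩ F) := by
  obtain ⟨C, R, hC, hR, hCR⟩ := hE
  obtain ⟨D, S, hD, hS, hDS⟩ := hF
  exact ⟨C ∩ D, R ∩ S, hC.inter _ _ hD, Language.IsRegular.inf hR hS, fun w => by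
    simp only [Set.mem_inter_iff, hCR, hDS]; tauto⟩

theorem iInter {ι : Type} [Fintype ι] {E : ι → Set (A → ℤ)}
    (hE : ∀ i, IsConstraintModRegular (E i)) : IsConstraintModRegular (⋂ i, E i) := by
  rw [show (⋂ i, E i) = Finset.univ.inf E from (Finset.inf_univ_eq_iInf E).symm]
  exact Finset.inf_induction univ (fun _ h₁ _ h₂ => h₁.inter h₂) fun i _ => hE i

end IsConstraintModRegular

theorem ElementaryRegion.isConstraintModRegular {E : Set (A → ℤ)} (hE : ElementaryRegion E) :
    IsConstraintModRegular E := by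
  rcases hE with h | h | ⟨a, b, c, hc, rfl⟩
  · exact ⟨E, _, .atom _ (Or.inl h), regular_univ, fun _ => by simp⟩
  · exact ⟨E, _, .atom _ (Or.inr h), regular_univ, fun _ => by simp⟩
  · exact ⟨_, _, .univ, regular_setOf_modEq a b hc, fun _ => by simp⟩

end ConstraintModRegular

section GeneratingFunction

variable {A : Type} [DecidableEq A]

theorem finite_setOf_count_eq [Fintype A] (d : A →₀ ℕ) :
    {w : List A | ∀ a, w.count a = d a}.Finite := by
  refine (List.finite_length_eq A (∑ a, d a)).subset fun w hw => ?_
  have := Multiset.sum_count_eq_card (s := Finset.univ) (m := (w : Multiset A)) fun a _ =>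
    Finset.mem_univ a
  simp only [Multiset.coe_count, Multiset.coe_card] at this
  exact this.symm.trans (Finset.sum_congr rfl fun a _ => hw a)

theorem genFun_eq_ncard (L : Set (List A)) (d : A →₀ ℕ) :
    genFun L d = ((L ∩ {w | ∀ a, w.count a = d a}).ncard : ℂ) := by
  rw [genFun, ← Nat.card_coe_set_eq]
  rfl

theorem genFun_empty : genFun (∅ : Set (List A)) = 0 := by
  funext d
  simp [genFun_eq_ncard]

theorem genFun_iUnion [Fintype A] {ι : Type} [Fintype ι] (L : ι → Set (List A))
    (h : Pairwise fun i j => Disjoint (L i) (L j)) : genFun (⋃ i, L i) = ∑ i, genFun (L i) := by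
  funext d
  rw [genFun_eq_ncard, Set.iUnion_inter, Set.ncard_iUnion_of_finite
      (fun i => (finite_setOf_count_eq d).inter_of_right _)
      (fun i j hij => (h hij).mono Set.inter_subset_left Set.inter_subset_left),
    finsum_eq_sum_of_fintype]
  simp [genFun_eq_ncard]

end GeneratingFunction

/-- Every polyhedrally constrained language is a finite disjoint union of linearly
constrained languages; consequently (granting Massazza's theorem that linearly
constrained languages have holonomic generating functions, and closure of holonomic
functions under addition, and closure of unambiguous context-free languages under
intersection with regular languages) its multivariate generating function is
holonomic. -/
theorem polyhedrally_constrained_decomposition_and_holonomic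
    {A : Type} [Fintype A] [DecidableEq A]
    (Unambiguous : Set (List A) → Prop)
    (Holonomic : ((A →₀ ℕ) → ℂ) → Prop)
    (hclosure : ∀ U R : Set (List A), Unambiguous U → Regular R → Unambiguous (U ∩ R))
    (hMassazza : ∀ (U : Set (List A)) (C : Set (A → ℤ)),
      Unambiguous U → CConstraint C → Holonomic (genFun (constrained U C)))
    (hadd : ∀ f g : (A →₀ ℕ) → ℂ, Holonomic f → Holonomic g → Holonomic (f + g))
    (U : Set (List A)) (P : Set (A → ℤ))
    (hU : Unambiguous U) (hP : Polyhedral P) :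
    (∃ (k : ℕ) (V : Fin k → Set (List A)) (C : Fin k → Set (A → ℤ)),
        (∀ i, Unambiguous (V i)) ∧ (∀ i, CConstraint (C i)) ∧
        (∀ i j, i ≠ j →
          Disjoint (constrained (V i) (C i)) (constrained (V j) (C j))) ∧
        constrained U P = ⋃ i, constrained (V i) (C i)) ∧
    Holonomic (genFun (constrained U P)) := by
  obtain ⟨k, B, hB, hBdisj, rfl⟩ := hP
  have hBsplit : ∀ i, IsConstraintModRegular (B i) := fun i => by
    obtain ⟨l, E, hE, hBi⟩ := hB i
    rw [hBi]
    exact .iInter fun j => (hE j).isConstraintModRegular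
  choose C R hC hR hCR using hBsplit
  have hpiece : ∀ i, constrained U (B i) = constrained (U ∩ R i) (C i) := fun i =>
    constrained_eq_constrained_inter (hCR i) U
  have hVU : ∀ i, Unambiguous (U ∩ R i) := fun i => hclosure U (R i) hU (hR i)
  have hdisj : ∀ i j, i ≠ j →
      Disjoint (constrained (U ∩ R i) (C i)) (constrained (U ∩ R j) (C j)) := fun i j hij => by
    simpa only [← hpiece] using (hBdisj i j hij).constrained U U
  have hdecomp : constrained U (⋃ i, B i) = ⋃ i, constrained (U ∩ R i) (C i) := by
    simp only [constrained_iUnion, hpiece]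
  refine ⟨⟨k, fun i => U ∩ R i, C, hVU, hC, hdisj, hdecomp⟩, ?_⟩
  rw [hdecomp, genFun_iUnion _ hdisj]
  refine Finset.sum_induction _ Holonomic hadd ?_ fun i _ => hMassazza _ _ (hVU i) (hC i)
  simpa [constrained, genFun_empty] using hMassazza U ∅ hU .empty
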